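/- For each n ≥ 0 let f(n) ∈ ℤ[p,q,r] be the polynomial Σ_{σ ∈ Q_n(123)} p^{plat(σ)} q^{des(σ)} r^{asc(σ)}, and for a word w let f(n|w) = Σ p^{plat(σ)} q^{des(σ)} r^{asc(σ)}, the sum over those σ ∈ Q_n(123) that begin with the prefix w. Then for all n ≥ 2: f(n) − p·q·f(n−1) = Σ_{i=1}^{n} f(n|ii) + q·(r−p)·Σ_{i=1}^{n−1} f(n−1|ii), where f(n|ii) denotes the sum over σ ∈ Q_n(123) whose first two letters both equal i. -/

import Mathlib

open scoped Classical

/-- `σ` is a Stirling permutation of order `n`: each letter `1,…,n` occurs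
exactly twice and every entry strictly between the two occurrences of a letter
is greater than that letter. -/
def IsStirling (n : ℕ) (σ : List ℕ) : Prop :=
  (∀ i : ℕ, σ.count i = if 1 ≤ i ∧ i ≤ n then 2 else 0) ∧
  (∀ j k l : ℕ, j < k → k < l → l < σ.length →
    σ.getD j 0 = σ.getD l 0 → σ.getD j 0 < σ.getD k 0)

/-- `σ` contains the pattern word `τ`. -/
def Contains (σ τ : List ℕ) : Prop :=
  ∃ ι : Fin τ.length → Fin σ.length, StrictMono ι ∧
    ∀ s t : Fin τ.length, τ.get s < τ.get t ↔ σ.get (ι s) < σ.get (ι t)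

/-- `σ` avoids the pattern word `τ`. -/
def Avoids (σ τ : List ℕ) : Prop := ¬ Contains σ τ

/-- Number of adjacent pairs of `σ` satisfying the relation `R`. -/
noncomputable def statCount (R : ℕ → ℕ → Prop) (σ : List ℕ) : ℕ :=
  Set.ncard {i : ℕ | i + 1 < σ.length ∧ R (σ.getD i 0) (σ.getD (i + 1) 0)}

/-- Number of descents. -/
noncomputable def desStat (σ : List ℕ) : ℕ := statCount (· > ·) σ
/-- Number of ascents. -/
noncomputable def ascStat (σ : List ℕ) : ℕ := statCount (· < ·) σ
/-- Number of plateaus. -/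
noncomputable def platStat (σ : List ℕ) : ℕ := statCount (· = ·) σ

/-- The finite set `Q_n(τ)` of Stirling permutations of order `n` avoiding `τ`. -/
noncomputable def QAvoid (n : ℕ) (τ : List ℕ) : Finset (List ℕ) :=
  (((List.range n).flatMap fun i => [i + 1, i + 1]).permutations.toFinset).filter
    fun σ => IsStirling n σ ∧ Avoids σ τ

open MvPolynomial in
/-- `f(n) = Σ_{σ ∈ Q_n(123)} p^{plat σ} q^{des σ} r^{asc σ}` with
`p = X 0`, `q = X 1`, `r = X 2`. -/
noncomputable def f123 (n : ℕ) : MvPolynomial (Fin 3) ℤ :=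
  ∑ σ ∈ QAvoid n [1, 2, 3], X 0 ^ platStat σ * X 1 ^ desStat σ * X 2 ^ ascStat σ

open MvPolynomial in
/-- `f(n|w)`: the same sum restricted to `σ ∈ Q_n(123)` beginning with the prefix `w`. -/
noncomputable def f123pre (n : ℕ) (w : List ℕ) : MvPolynomial (Fin 3) ℤ :=
  ∑ σ ∈ (QAvoid n [1, 2, 3]).filter (fun σ => w <+: σ),
    X 0 ^ platStat σ * X 1 ^ desStat σ * X 2 ^ ascStat σ

/-! ### Auxiliary lemmas -/

lemma statCount_cons_cons (R : ℕ → ℕ → Prop) (x y : ℕ) (l : List ℕ) :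
    statCount R (x :: y :: l) = (if R x y then 1 else 0) + statCount R (y :: l) := by
  unfold statCount
  have hfin : ∀ (m : List ℕ),
      {i : ℕ | i + 1 < m.length ∧ R (m.getD i 0) (m.getD (i + 1) 0)}.Finite := by
    intro m
    apply Set.Finite.subset (Set.finite_Iio m.length)
    intro i hi; exact lt_trans (Nat.lt_succ_self i) hi.1
  have h1 : {i : ℕ | i + 1 < (x :: y :: l).length ∧ R ((x::y::l).getD i 0) ((x::y::l).getD (i+1) 0)}
      = (if R x y then {0} else ∅) ∪
        (fun i => i + 1) ''
          {i : ℕ | i + 1 < (y :: l).length ∧ R ((y::l).getD i 0) ((y::l).getD (i+1) 0)} := by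
    ext i
    cases i with
    | zero =>
      simp only [Set.mem_setOf_eq, List.length_cons, List.getD_cons_zero, List.getD_cons_succ,
        Set.mem_union, Set.mem_image]
      constructor
      · rintro ⟨-, h⟩; left; simp [h]
      · rintro (h | ⟨j, hj, hj2⟩)
        · constructor
          · omega
          · split at h <;> simp_all
        · omega
    | succ m =>
      simp only [Set.mem_setOf_eq, List.length_cons, List.getD_cons_succ, Set.mem_union,
        Set.mem_image]
      constructor
      · rintro ⟨h1, h2⟩; right; exact ⟨m, ⟨by simpa using h1, h2⟩, rfl⟩
      · rintro (h | ⟨j, hj, hj2⟩)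
        · split at h <;> simp_all
        · obtain rfl : j = m := by omega
          exact ⟨by simpa using hj.1, hj.2⟩
  have hdisj : Disjoint (if R x y then ({0} : Set ℕ) else ∅)
      ((fun i => i + 1) ''
        {i : ℕ | i + 1 < (y :: l).length ∧ R ((y::l).getD i 0) ((y::l).getD (i+1) 0)}) := by
    rw [Set.disjoint_left]; intro i hi hi2
    obtain ⟨j, -, rfl⟩ := hi2
    split at hi <;> simp_all
  have hs : (if R x y then ({0} : Set ℕ) else ∅).Finite := by
    split
    · exact Set.finite_singleton 0
    · exact Set.finite_empty
  rw [h1, Set.ncard_union_eq hdisj hs ((hfin _).image _),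
    Set.ncard_image_of_injective _ (add_left_injective 1)]
  congr 1; split <;> simp

lemma count_base (n i : ℕ) :
    (((List.range n).flatMap fun j => [j + 1, j + 1]).count i)
      = if 1 ≤ i ∧ i ≤ n then 2 else 0 := by
  induction n with
  | zero => simp; intro h; omega
  | succ m ih =>
    rw [List.range_succ, List.flatMap_append, List.count_append, ih]
    simp only [List.flatMap_cons, List.flatMap_nil, List.append_nil, List.count_cons,
      List.count_nil]
    split_ifs <;> simp_all <;> omega

lemma mem_QAvoid {n : ℕ} {τ σ : List ℕ} :
    σ ∈ QAvoid n τ ↔ IsStirling n σ ∧ Avoids σ τ := by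
  unfold QAvoid
  rw [Finset.mem_filter, List.mem_toFinset, List.mem_permutations]
  constructor
  · tauto
  · rintro ⟨hs, ha⟩
    refine ⟨?_, hs, ha⟩
    rw [List.perm_iff_count]
    intro i; rw [hs.1 i, count_base]

lemma length_base (n : ℕ) :
    ((List.range n).flatMap fun j => [j + 1, j + 1]).length = 2 * n := by
  induction n with
  | zero => simp
  | succ m ih => rw [List.range_succ, List.flatMap_append, List.length_append, ih]; simp; omega

lemma length_stirling {n : ℕ} {σ : List ℕ} (h : IsStirling n σ) : σ.length = 2 * n := by
  have hp : List.Perm σ ((List.range n).flatMap fun j => [j + 1, j + 1]) := by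
    rw [List.perm_iff_count]; intro i; rw [h.1 i, count_base]
  rw [hp.length_eq, length_base]

lemma mem_bound {n : ℕ} {σ : List ℕ} (h : IsStirling n σ) {x : ℕ} (hx : x ∈ σ) :
    1 ≤ x ∧ x ≤ n := by
  have h2 := h.1 x
  rw [← List.count_pos_iff] at hx
  split at h2 <;> omega

lemma count_eq_two {n : ℕ} {σ : List ℕ} (h : IsStirling n σ) {x : ℕ} (hx : x ∈ σ) :
    σ.count x = 2 := by
  have h2 := h.1 x
  rw [← List.count_pos_iff] at hx
  split at h2 <;> omega

def Incr3 (σ : List ℕ) : Prop :=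
  ∃ i j k : ℕ, i < j ∧ j < k ∧ k < σ.length ∧
    σ.getD i 0 < σ.getD j 0 ∧ σ.getD j 0 < σ.getD k 0

lemma contains_iff_incr3 (σ : List ℕ) : Contains σ [1, 2, 3] ↔ Incr3 σ := by
  constructor
  · rintro ⟨ι, hmono, hiff⟩
    have h01 : (⟨0, by norm_num⟩ : Fin ([1,2,3] : List ℕ).length) < ⟨1, by norm_num⟩ := by
      simp [Fin.lt_def]
    have h12 : (⟨1, by norm_num⟩ : Fin ([1,2,3] : List ℕ).length) < ⟨2, by norm_num⟩ := by
      simp [Fin.lt_def]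
    refine ⟨ι ⟨0, by norm_num⟩, ι ⟨1, by norm_num⟩, ι ⟨2, by norm_num⟩,
      hmono h01, hmono h12, (ι ⟨2, by norm_num⟩).2, ?_, ?_⟩
    · have := (hiff ⟨0, by norm_num⟩ ⟨1, by norm_num⟩).mp (by norm_num)
      simpa [List.getD_eq_getElem σ 0 (ι _).2, List.get_eq_getElem] using this
    · have := (hiff ⟨1, by norm_num⟩ ⟨2, by norm_num⟩).mp (by norm_num)
      simpa [List.getD_eq_getElem σ 0 (ι _).2, List.get_eq_getElem] using this
  · rintro ⟨i, j, k, hij, hjk, hk, v1, v2⟩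
    have hi : i < σ.length := by omega
    have hj : j < σ.length := by omega
    have g1 : σ[i] < σ[j] := by
      rwa [List.getD_eq_getElem σ 0 hi, List.getD_eq_getElem σ 0 hj] at v1
    have g2 : σ[j] < σ[k] := by
      rwa [List.getD_eq_getElem σ 0 hj, List.getD_eq_getElem σ 0 hk] at v2
    have g3 : σ[i] < σ[k] := lt_trans g1 g2
    refine ⟨fun s => if s.val = 0 then ⟨i, hi⟩ else if s.val = 1 then ⟨j, hj⟩ else ⟨k, hk⟩,
      ?_, ?_⟩
    · rintro ⟨sv, hs⟩ ⟨tv, ht⟩ hst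
      simp only [List.length_cons, List.length_nil] at hs ht
      simp only [Fin.lt_def] at hst
      simp only [Fin.mk_lt_mk]
      split_ifs <;> simp_all [Fin.lt_def] <;> omega
    · rintro ⟨sv, hs⟩ ⟨tv, ht⟩
      simp only [List.length_cons, List.length_nil] at hs ht
      interval_cases sv <;> interval_cases tv <;>
        simp_all [List.get_eq_getElem] <;> omega

lemma getD_large (a b c : ℕ) (ρ : List ℕ) (m : ℕ) (hm : 3 ≤ m) :
    (a :: b :: c :: ρ).getD m 0 = ρ.getD (m - 3) 0 := by
  obtain ⟨m', rfl⟩ : ∃ m', m = m' + 3 := ⟨m - 3, by omega⟩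
  simp [List.getD_cons_succ]

lemma getD_large1 (a : ℕ) (ρ : List ℕ) (m : ℕ) (hm : 1 ≤ m) :
    (a :: ρ).getD m 0 = ρ.getD (m - 1) 0 := by
  obtain ⟨m', rfl⟩ : ∃ m', m = m' + 1 := ⟨m - 1, by omega⟩
  simp [List.getD_cons_succ]

lemma getD_mem {ρ : List ℕ} {m : ℕ} (hm : m < ρ.length) : ρ.getD m 0 ∈ ρ := by
  rw [List.getD_eq_getElem ρ 0 hm]; exact List.getElem_mem hm

lemma getD_large2 (x y : ℕ) (l : List ℕ) (m : ℕ) (hm : 2 ≤ m) :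
    (x :: y :: l).getD m 0 = l.getD (m - 2) 0 := by
  obtain ⟨m', rfl⟩ : ∃ m', m = m' + 2 := ⟨m - 2, by omega⟩
  simp [List.getD_cons_succ]

lemma stirling_cons_le {n x y : ℕ} {l : List ℕ} (h : IsStirling n (x :: y :: l)) : x ≤ y := by
  by_contra hxy
  push_neg at hxy
  have hcount : (x :: y :: l).count x = 2 := count_eq_two h List.mem_cons_self
  have hxl : x ∈ l := by
    rw [← List.count_pos_iff]
    have hyx : y ≠ x := by omega
    simp [List.count_cons, hyx] at hcount
    omega
  obtain ⟨m, hm, hval⟩ := List.getElem_of_mem hxl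
  have hx : (x :: y :: l).getD 0 0 = (x :: y :: l).getD (m + 2) 0 := by
    rw [getD_large2 x y l (m + 2) (by omega), List.getD_cons_zero]
    simp only [Nat.add_sub_cancel]
    rw [List.getD_eq_getElem l 0 hm, hval]
  have := h.2 0 1 (m + 2) (by omega) (by omega) (by simp; omega) hx
  simp only [List.getD_cons_zero, List.getD_cons_succ] at this
  omega

lemma struct {n : ℕ} {σ : List ℕ} (hn : 2 ≤ n) (hs : IsStirling n σ)
    (hav : Avoids σ [1, 2, 3]) (hne : ¬ σ.getD 0 0 = σ.getD 1 0) :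
    ∃ a b ρ, σ = a :: n :: n :: b :: ρ ∧ a < n ∧ b < n := by
  have hlen := length_stirling hs
  rcases σ with _ | ⟨s0, _ | ⟨s1, _ | ⟨s2, _ | ⟨s3, ρ⟩⟩⟩⟩
  · simp at hlen; omega
  · simp at hlen; omega
  · simp at hlen; omega
  · simp at hlen; omega
  · simp only [List.getD_cons_zero, List.getD_cons_succ] at hne
    have h01 : s0 ≤ s1 := stirling_cons_le hs
    have h01' : s0 < s1 := by omega
    have hs1n : s1 ≤ n := (mem_bound hs (by simp)).2
    have hcn : (s0 :: s1 :: s2 :: s3 :: ρ).count n = 2 := by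
      rw [hs.1 n, if_pos ⟨by omega, le_refl n⟩]
    -- s1 = n
    have hs1 : s1 = n := by
      by_contra hs1
      have hs0n : s0 < n := by omega
      have hnmem : n ∈ (s0 :: s1 :: s2 :: s3 :: ρ) := by
        rw [← List.count_pos_iff]; omega
      obtain ⟨m, hm, hval⟩ := List.getElem_of_mem hnmem
      have hm2 : 2 ≤ m := by
        rcases Nat.lt_or_ge m 2 with h | h
        · interval_cases m <;> simp_all <;> omega
        · exact h
      have : Incr3 (s0 :: s1 :: s2 :: s3 :: ρ) := by
        refine ⟨0, 1, m, by omega, by omega, by simpa using hm, ?_, ?_⟩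
        · simp only [List.getD_cons_zero, List.getD_cons_succ]; omega
        · simp only [List.getD_cons_zero, List.getD_cons_succ]
          rw [List.getD_eq_getElem _ 0 hm, hval]; omega
      exact hav ((contains_iff_incr3 _).mpr this)
    have hs0n : s0 < n := by omega
    subst s1
    -- s2 = n
    have hs2n : s2 ≤ n := (mem_bound hs (by simp)).2
    have hs0ne : ¬ s0 = n := by omega
    have hcn' : (if s2 = n then 1 else 0) + (s3 :: ρ).count n = 1 := by
      simp [List.count_cons, hs0ne] at hcn
      simp [List.count_cons]
      split_ifs at hcn ⊢ <;> simp_all <;> omega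
    have hs2 : s2 = n := by
      by_contra hs2
      have hcn2 : (s3 :: ρ).count n = 1 := by simp [hs2] at hcn'; omega
      have hnmem : n ∈ (s3 :: ρ) := by rw [← List.count_pos_iff]; omega
      obtain ⟨m, hm, hval⟩ := List.getElem_of_mem hnmem
      have heq : (s0 :: n :: s2 :: s3 :: ρ).getD 1 0
          = (s0 :: n :: s2 :: s3 :: ρ).getD (m + 3) 0 := by
        simp only [List.getD_cons_succ, List.getD_cons_zero]
        rw [List.getD_eq_getElem _ 0 hm, hval]
      have := hs.2 1 2 (m + 3) (by omega) (by omega) (by simp at hm ⊢; omega) heq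
      simp only [List.getD_cons_succ, List.getD_cons_zero] at this
      omega
    subst s2
    have hcn3 : (s3 :: ρ).count n = 0 := by simp at hcn'; omega
    have hs3 : ¬ s3 = n := by
      intro h; subst h
      simp [List.count_cons] at hcn3
    have hs3n : s3 ≤ n := (mem_bound hs (by simp)).2
    exact ⟨s0, s3, ρ, rfl, hs0n, by omega⟩

lemma count_cons3 (a n i : ℕ) (ρ : List ℕ) :
    (a :: n :: n :: ρ).count i = (a :: ρ).count i + (if n = i then 2 else 0) := by
  simp [List.count_cons]
  split_ifs <;> omega

lemma getD_shift {a n : ℕ} {ρ : List ℕ} (m : ℕ) (hm : 3 ≤ m) :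
    (a :: n :: n :: ρ).getD m 0 = (a :: ρ).getD (m - 2) 0 := by
  rw [getD_large a n n ρ m hm, getD_large1 a ρ (m - 2) (by omega)]
  congr 1

lemma getD_one (x y : ℕ) (l : List ℕ) : (x :: y :: l).getD 1 0 = y := rfl

lemma getD_two (x y z : ℕ) (l : List ℕ) : (x :: y :: z :: l).getD 2 0 = z := rfl

lemma stirling_up {n a : ℕ} {ρ : List ℕ} (hn : 2 ≤ n) (ht : IsStirling (n - 1) (a :: ρ)) :
    IsStirling n (a :: n :: n :: ρ) := by
  have hbound : ∀ x ∈ a :: ρ, x < n := fun x hx => by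
    have := mem_bound ht hx; omega
  have han : a < n := hbound a (by simp)
  have hρ : ∀ m, m < ρ.length → ρ.getD m 0 < n := fun m hm =>
    hbound _ (List.mem_cons_of_mem a (getD_mem hm))
  constructor
  · intro i
    rw [count_cons3, ht.1 i]
    split_ifs <;> omega
  · intro j k l hjk hkl hl hval
    simp only [List.length_cons] at hl
    have hlρ : l < ρ.length + 3 := by omega
    rcases Nat.lt_or_ge k 3 with hk3 | hk3
    · -- k = 1 or k = 2
      have hk12 : k = 1 ∨ k = 2 := by omega
      have hkn : (a :: n :: n :: ρ).getD k 0 = n := by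
        rcases hk12 with rfl | rfl <;> simp
      rw [hkn]
      -- j = 0 or j = 1
      rcases (by omega : j = 0 ∨ j = 1) with rfl | rfl
      · simpa using han
      · -- j = 1, k = 2, value n = σ_l which is in ρ: contradiction
        obtain rfl : k = 2 := by omega
        have hl3 : 3 ≤ l := by omega
        rw [getD_large a n n ρ l hl3, getD_one] at hval
        have := hρ (l - 3) (by omega)
        omega
    · -- k ≥ 3, l ≥ 4
      rcases (by omega : j = 0 ∨ j = 1 ∨ j = 2 ∨ 3 ≤ j) with rfl | rfl | rfl | hj3
      · -- j = 0
        have h2 := ht.2 0 (k - 2) (l - 2) (by omega) (by omega) (by simp; omega)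
          (by rw [← getD_shift l (by omega), ← hval]; simp)
        rw [getD_shift k hk3]
        simpa using h2
      · -- j = 1 : σ_j = n = σ_l ∈ ρ, contradiction
        rw [getD_large a n n ρ l (by omega), getD_one] at hval
        have := hρ (l - 3) (by omega)
        omega
      · rw [getD_large a n n ρ l (by omega), getD_two] at hval
        have := hρ (l - 3) (by omega)
        omega
      · have h2 := ht.2 (j - 2) (k - 2) (l - 2) (by omega) (by omega) (by simp; omega)
          (by rw [← getD_shift l (by omega), ← getD_shift j (by omega)]; exact hval)
        rw [getD_shift k hk3, getD_shift j hj3]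
        exact h2

lemma stirling_down {n a : ℕ} {ρ : List ℕ} (hn : 2 ≤ n)
    (hs : IsStirling n (a :: n :: n :: ρ)) : IsStirling (n - 1) (a :: ρ) := by
  constructor
  · intro i
    have h1 := hs.1 i
    rw [count_cons3] at h1
    split_ifs at h1 ⊢ <;> omega
  · intro j k l hjk hkl hl hval
    simp only [List.length_cons] at hl
    rcases (by omega : j = 0 ∨ 1 ≤ j) with rfl | hj1
    · have h2 := hs.2 0 (k + 2) (l + 2) (by omega) (by omega) (by simp; omega)
        (by rw [getD_shift (l + 2) (by omega)]; simpa using hval)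
      rw [getD_shift (k + 2) (by omega)] at h2
      simpa using h2
    · have h2 := hs.2 (j + 2) (k + 2) (l + 2) (by omega) (by omega) (by simp; omega)
        (by rw [getD_shift (l + 2) (by omega), getD_shift (j + 2) (by omega)]; simpa using hval)
      rw [getD_shift (k + 2) (by omega), getD_shift (j + 2) (by omega)] at h2
      simpa using h2

lemma incr3_up {a n : ℕ} {ρ : List ℕ} (h : Incr3 (a :: ρ)) : Incr3 (a :: n :: n :: ρ) := by
  obtain ⟨i, j, k, hij, hjk, hk, v1, v2⟩ := h
  simp only [List.length_cons] at hk
  have hval : ∀ m, (a :: n :: n :: ρ).getD (if m = 0 then 0 else m + 2) 0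
      = (a :: ρ).getD m 0 := by
    intro m
    rcases (by omega : m = 0 ∨ 1 ≤ m) with rfl | h1
    · simp
    · rw [if_neg (by omega), getD_shift (m + 2) (by omega)]
      norm_num
  refine ⟨(if i = 0 then 0 else i + 2), (if j = 0 then 0 else j + 2),
    (if k = 0 then 0 else k + 2), ?_, ?_, ?_, ?_, ?_⟩
  · split_ifs <;> omega
  · split_ifs <;> omega
  · simp only [List.length_cons]; split_ifs <;> omega
  · rw [hval i, hval j]; exact v1
  · rw [hval j, hval k]; exact v2

lemma incr3_down {a n : ℕ} {ρ : List ℕ} (han : a < n)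
    (hρ : ∀ m, m < ρ.length → ρ.getD m 0 < n) (h : Incr3 (a :: n :: n :: ρ)) :
    Incr3 (a :: ρ) := by
  obtain ⟨i, j, k, hij, hjk, hk, v1, v2⟩ := h
  simp only [List.length_cons] at hk
  have hk3 : 3 ≤ k := by
    by_contra hc
    rcases (by omega : k = 1 ∨ k = 2) with rfl | rfl
    · omega
    · obtain rfl : j = 1 := by omega
      rw [getD_one, getD_two] at v2
      omega
  have hσk : (a :: n :: n :: ρ).getD k 0 < n := by
    rw [getD_large a n n ρ k hk3]
    exact hρ (k - 3) (by omega)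
  have hj3 : 3 ≤ j := by
    by_contra hc
    rcases (by omega : j = 0 ∨ j = 1 ∨ j = 2) with rfl | rfl | rfl
    · omega
    · rw [getD_one] at v2; omega
    · rw [getD_two] at v2; omega
  have hσj : (a :: n :: n :: ρ).getD j 0 < n := by
    rw [getD_large a n n ρ j hj3]
    exact hρ (j - 3) (by omega)
  have hi03 : i = 0 ∨ 3 ≤ i := by
    by_contra hc
    push_neg at hc
    rcases (by omega : i = 1 ∨ i = 2) with rfl | rfl
    · rw [getD_one] at v1; omega
    · rw [getD_two] at v1; omega
  refine ⟨(if i = 0 then 0 else i - 2), j - 2, k - 2, ?_, by omega, by simp; omega, ?_, ?_⟩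
  · split_ifs <;> omega
  · rw [← getD_shift j hj3]
    rcases hi03 with rfl | hi3
    · simpa using v1
    · rw [if_neg (by omega), ← getD_shift i hi3]; exact v1
  · rw [← getD_shift j hj3, ← getD_shift k hk3]; exact v2

lemma avoids_iff {a n : ℕ} {ρ : List ℕ} (han : a < n)
    (hρ : ∀ m, m < ρ.length → ρ.getD m 0 < n) :
    Avoids (a :: n :: n :: ρ) [1, 2, 3] ↔ Avoids (a :: ρ) [1, 2, 3] := by
  unfold Avoids
  rw [contains_iff_incr3, contains_iff_incr3]
  exact not_congr ⟨fun h => incr3_down han hρ h, fun h => incr3_up h⟩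

lemma mem_iff {n a : ℕ} {ρ : List ℕ} (hn : 2 ≤ n) :
    (a :: n :: n :: ρ) ∈ QAvoid n [1, 2, 3] ↔ (a :: ρ) ∈ QAvoid (n - 1) [1, 2, 3] := by
  rw [mem_QAvoid, mem_QAvoid]
  constructor
  · rintro ⟨hs, hav⟩
    have ht := stirling_down hn hs
    have hbound : ∀ x ∈ a :: ρ, x < n := fun x hx => by
      have := mem_bound ht hx; omega
    exact ⟨ht, (avoids_iff (hbound a (by simp))
      (fun m hm => hbound _ (List.mem_cons_of_mem a (getD_mem hm)))).mp hav⟩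
  · rintro ⟨ht, hav⟩
    have hbound : ∀ x ∈ a :: ρ, x < n := fun x hx => by
      have := mem_bound ht hx; omega
    exact ⟨stirling_up hn ht, (avoids_iff (hbound a (by simp))
      (fun m hm => hbound _ (List.mem_cons_of_mem a (getD_mem hm)))).mpr hav⟩

open MvPolynomial in
noncomputable def Wt (σ : List ℕ) : MvPolynomial (Fin 3) ℤ :=
  X 0 ^ platStat σ * X 1 ^ desStat σ * X 2 ^ ascStat σ

open MvPolynomial in
lemma f123_eq (n : ℕ) : f123 n = ∑ σ ∈ QAvoid n [1, 2, 3], Wt σ := rfl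

open MvPolynomial in
lemma f123pre_eq (n : ℕ) (w : List ℕ) :
    f123pre n w = ∑ σ ∈ (QAvoid n [1, 2, 3]).filter (fun σ => w <+: σ), Wt σ := rfl

open MvPolynomial in
lemma weight_eq {n a b : ℕ} (ρ : List ℕ) (han : a < n) (hbn : b < n) (hab : a ≤ b) :
    Wt (a :: n :: n :: b :: ρ)
      = (if a = b then (X 1 : MvPolynomial (Fin 3) ℤ) * X 2 else X 0 * X 1)
          * Wt (a :: b :: ρ) := by
  have hplat : platStat (a :: n :: n :: b :: ρ) = 1 + statCount (· = ·) (b :: ρ) := by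
    unfold platStat
    simp only [statCount_cons_cons]
    split_ifs <;> omega
  have hdes : desStat (a :: n :: n :: b :: ρ) = 1 + statCount (· > ·) (b :: ρ) := by
    unfold desStat
    simp only [statCount_cons_cons]
    split_ifs <;> omega
  have hasc : ascStat (a :: n :: n :: b :: ρ) = 1 + statCount (· < ·) (b :: ρ) := by
    unfold ascStat
    simp only [statCount_cons_cons]
    split_ifs <;> omega
  have hplat' : platStat (a :: b :: ρ)
      = (if a = b then 1 else 0) + statCount (· = ·) (b :: ρ) := by
    unfold platStat; simp only [statCount_cons_cons]; split_ifs <;> omega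
  have hdes' : desStat (a :: b :: ρ) = statCount (· > ·) (b :: ρ) := by
    unfold desStat
    simp only [statCount_cons_cons]
    split_ifs <;> omega
  have hasc' : ascStat (a :: b :: ρ)
      = (if a < b then 1 else 0) + statCount (· < ·) (b :: ρ) := by
    unfold ascStat; simp only [statCount_cons_cons]; split_ifs <;> omega
  unfold Wt
  rw [hplat, hdes, hasc, hplat', hdes', hasc']
  by_cases h : a = b
  · rw [if_pos h, if_pos h, if_neg (by omega)]
    ring
  · rw [if_neg h, if_neg h, if_pos (by omega)]
    ring

open MvPolynomial in
lemma sum_double (m : ℕ) (hm : 1 ≤ m) :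
    ∑ i ∈ Finset.Icc 1 m, f123pre m [i, i]
      = ∑ σ ∈ (QAvoid m [1, 2, 3]).filter (fun σ => σ.getD 0 0 = σ.getD 1 0), Wt σ := by
  have hset : (QAvoid m [1, 2, 3]).filter (fun σ => σ.getD 0 0 = σ.getD 1 0)
      = (Finset.Icc 1 m).biUnion
          (fun i => (QAvoid m [1, 2, 3]).filter (fun σ => [i, i] <+: σ)) := by
    ext σ
    simp only [Finset.mem_filter, Finset.mem_biUnion, Finset.mem_Icc]
    constructor
    · rintro ⟨hσ, hD⟩
      have hlen := length_stirling (mem_QAvoid.mp hσ).1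
      rcases σ with _ | ⟨s0, _ | ⟨s1, rest⟩⟩
      · simp at hlen; omega
      · simp at hlen; omega
      · rw [List.getD_cons_zero, getD_one] at hD
        have hb := mem_bound (mem_QAvoid.mp hσ).1 (List.mem_cons_self (a := s0))
        exact ⟨s0, ⟨hb.1, hb.2⟩, hσ, by rw [hD]; exact ⟨rest, rfl⟩⟩
    · rintro ⟨i, hi, hσ, hpre⟩
      obtain ⟨t, ht⟩ := hpre
      refine ⟨hσ, ?_⟩
      rw [← ht]
      rfl
  rw [hset, Finset.sum_biUnion]
  · exact Finset.sum_congr rfl (fun i _ => f123pre_eq m [i, i])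
  · intro x _ y _ hxy
    simp only [Function.onFun]
    rw [Finset.disjoint_left]
    intro σ h1 h2
    obtain ⟨t1, ht1⟩ := (Finset.mem_filter.mp h1).2
    obtain ⟨t2, ht2⟩ := (Finset.mem_filter.mp h2).2
    apply hxy
    have : x :: x :: t1 = y :: y :: t2 := by simpa using ht1.trans ht2.symm
    exact (List.cons_eq_cons.mp this).1

open MvPolynomial in
lemma sum_nondouble (n : ℕ) (hn : 2 ≤ n) :
    ∑ σ ∈ (QAvoid n [1, 2, 3]).filter (fun σ => ¬ σ.getD 0 0 = σ.getD 1 0), Wt σ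
      = ∑ τ ∈ QAvoid (n - 1) [1, 2, 3],
          (if τ.getD 0 0 = τ.getD 1 0 then (X 1 : MvPolynomial (Fin 3) ℤ) * X 2
            else X 0 * X 1) * Wt τ := by
  have hstruct : ∀ σ ∈ (QAvoid n [1, 2, 3]).filter (fun σ => ¬ σ.getD 0 0 = σ.getD 1 0),
      ∃ a b ρ, σ = a :: n :: n :: b :: ρ ∧ a < n ∧ b < n := by
    intro σ hσ
    obtain ⟨hσQ, hne⟩ := Finset.mem_filter.mp hσ
    obtain ⟨hs, hav⟩ := mem_QAvoid.mp hσQ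
    exact struct hn hs hav hne
  have htau : ∀ τ ∈ QAvoid (n - 1) [1, 2, 3], ∃ a b ρ', τ = a :: b :: ρ' ∧ a < n := by
    intro τ hτ
    obtain ⟨ht, -⟩ := mem_QAvoid.mp hτ
    have hlen := length_stirling ht
    rcases τ with _ | ⟨a, _ | ⟨b, ρ'⟩⟩
    · simp at hlen; omega
    · simp at hlen; omega
    · have := mem_bound ht (List.mem_cons_self (a := a))
      exact ⟨a, b, ρ', rfl, by omega⟩
  refine Finset.sum_nbij' (i := fun σ => σ.headD 0 :: σ.drop 3)
    (j := fun τ => τ.headD 0 :: n :: n :: τ.tail) ?_ ?_ ?_ ?_ ?_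
  · intro σ hσ
    obtain ⟨a, b, ρ, rfl, han, hbn⟩ := hstruct σ hσ
    simpa using (mem_iff (ρ := b :: ρ) hn).mp (Finset.mem_filter.mp hσ).1
  · intro τ hτ
    obtain ⟨a, b, ρ', rfl, han⟩ := htau τ hτ
    simp only [List.headD_cons, List.tail_cons, Finset.mem_filter]
    refine ⟨(mem_iff (ρ := b :: ρ') hn).mpr hτ, ?_⟩
    rw [List.getD_cons_zero, getD_one]
    omega
  · intro σ hσ
    obtain ⟨a, b, ρ, rfl, -, -⟩ := hstruct σ hσ
    rfl
  · intro τ hτ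
    obtain ⟨a, b, ρ', rfl, -⟩ := htau τ hτ
    rfl
  · intro σ hσ
    obtain ⟨a, b, ρ, rfl, han, hbn⟩ := hstruct σ hσ
    have hτ := (mem_iff (ρ := b :: ρ) hn).mp (Finset.mem_filter.mp hσ).1
    have hab : a ≤ b := stirling_cons_le (mem_QAvoid.mp hτ).1
    simp only [List.headD_cons, List.drop_succ_cons, List.drop_zero]
    rw [weight_eq ρ han hbn hab]
    congr 1

open MvPolynomial in
/-- Recurrence `f(n) − p·q·f(n−1) = Σ_{i=1}^{n} f(n|ii) + q·(r−p)·Σ_{i=1}^{n−1} f(n−1|ii)`. -/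
theorem f123_recurrence (n : ℕ) (hn : 2 ≤ n) (p q r : MvPolynomial (Fin 3) ℤ)
    (hp : p = X 0) (hq : q = X 1) (hr : r = X 2) :
    f123 n - p * q * f123 (n - 1) =
      (∑ i ∈ Finset.Icc 1 n, f123pre n [i, i]) +
        q * (r - p) * ∑ i ∈ Finset.Icc 1 (n - 1), f123pre (n - 1) [i, i] := by
  subst hp hq hr
  have h1 : f123 n = (∑ i ∈ Finset.Icc 1 n, f123pre n [i, i])
      + ∑ σ ∈ (QAvoid n [1, 2, 3]).filter (fun σ => ¬ σ.getD 0 0 = σ.getD 1 0), Wt σ := by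
    rw [f123_eq, sum_double n (by omega),
      ← Finset.sum_filter_add_sum_filter_not (QAvoid n [1, 2, 3])
        (fun σ => σ.getD 0 0 = σ.getD 1 0) Wt]
  have h3 : f123 (n - 1) = (∑ i ∈ Finset.Icc 1 (n - 1), f123pre (n - 1) [i, i])
      + ∑ σ ∈ (QAvoid (n - 1) [1, 2, 3]).filter (fun σ => ¬ σ.getD 0 0 = σ.getD 1 0), Wt σ := by
    rw [f123_eq, sum_double (n - 1) (by omega),
      ← Finset.sum_filter_add_sum_filter_not (QAvoid (n - 1) [1, 2, 3])
        (fun σ => σ.getD 0 0 = σ.getD 1 0) Wt]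
  have h4 : ∑ σ ∈ (QAvoid n [1, 2, 3]).filter (fun σ => ¬ σ.getD 0 0 = σ.getD 1 0), Wt σ
      = X 1 * X 2 * (∑ i ∈ Finset.Icc 1 (n - 1), f123pre (n - 1) [i, i])
        + X 0 * X 1 *
          ∑ σ ∈ (QAvoid (n - 1) [1, 2, 3]).filter (fun σ => ¬ σ.getD 0 0 = σ.getD 1 0), Wt σ := by
    rw [sum_nondouble n hn,
      ← Finset.sum_filter_add_sum_filter_not (QAvoid (n - 1) [1, 2, 3])
        (fun τ => τ.getD 0 0 = τ.getD 1 0)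
        (fun τ => (if τ.getD 0 0 = τ.getD 1 0 then (X 1 : MvPolynomial (Fin 3) ℤ) * X 2
          else X 0 * X 1) * Wt τ),
      sum_double (n - 1) (by omega)]
    congr 1
    · rw [Finset.mul_sum]
      refine Finset.sum_congr rfl fun τ hτ => ?_
      rw [if_pos (Finset.mem_filter.mp hτ).2]
    · rw [Finset.mul_sum]
      refine Finset.sum_congr rfl fun τ hτ => ?_
      rw [if_neg (Finset.mem_filter.mp hτ).2]
  rw [h1, h3, h4]
  ring
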